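/- arXiv:math/9906198 — 2 statements merged into one kernel-verified Lean document; each statement's English description precedes it below -/
import Mathlib

section
/- Let f = (f_1, ..., f_n) be a system of n algebraic functions on ℂ^n, and let E_n(x, z) be the embedded system with equations f_k(x) + Σ_{j=1}^{n} λ_{k,j} z_j = 0 (k = 1, ..., n) and L_j(x) + z_j = 0 (j = 1, ..., n), where the L_j are affine-linear functions on ℂ^n. If the coefficients of the L_j and the multipliers λ_{k,j} are chosen generically (i.e., outside a proper algebraic subset of the parameter space), then E_n(x, z) = 0 has a solution with z = (z_1, ..., z_n) = 0 only if f is identically zero on ℂ^n. -/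
set_option synthInstance.maxHeartbeats 1000000
set_option maxHeartbeats 1000000

open Filter Topology

/-- The common zero set in `ℂ^σ` of a set of polynomials. -/
def zlocus {σ : Type*} (S : Set (MvPolynomial σ ℂ)) : Set (σ → ℂ) :=
  {x | ∀ p ∈ S, MvPolynomial.eval x p = 0}

/-- An (affine) algebraic subset of `ℂ^σ`. -/
def IsAlgSet {σ : Type*} (V : Set (σ → ℂ)) : Prop := ∃ S, V = zlocus S

/-- A Zariski open subset of a complex affine space: the complement of an
algebraic subset. -/
def IsZariskiOpen {σ : Type*} (U : Set (σ → ℂ)) : Prop := IsAlgSet Uᶜ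

/-- A subset `U` of `ℂ^σ` that is generic for the underlying real algebraic
structure: its complement is contained in the real zero set of a nonzero real
polynomial in the real and imaginary parts of the coordinates.  (Such a set is
dense, and Zariski open data of this kind is what a random choice of parameters
achieves with probability one.) -/
def RZariskiGeneric {σ : Type*} (U : Set (σ → ℂ)) : Prop :=
  ∃ P : MvPolynomial (σ ⊕ σ) ℝ, P ≠ 0 ∧
    ∀ y : σ → ℂ, y ∉ U →
      MvPolynomial.eval (Sum.elim (fun s => (y s).re) (fun s => (y s).im)) P = 0

/-- A point `p` is an isolated point of the set `S`. -/
def IsIsolatedIn {α : Type*} [TopologicalSpace α] (S : Set α) (p : α) : Prop :=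
  p ∈ S ∧ ∃ U : Set α, IsOpen U ∧ p ∈ U ∧ S ∩ U = {p}

/-- The index type of the parameter space `ℂ^{n×(n+1)} × ℂ^{n×n}` for the embedding
of a system on `ℂ^n`: coefficients of the affine-linear slicing functions `L_j` and
multipliers `λ_{k,j}`. -/
abbrev CParam (n : ℕ) := (Fin n × Fin (n + 1)) ⊕ (Fin n × Fin n)

/-- The `j`-th affine-linear slicing function `L_j(x) = a_j + a_{j,1}x_1 + ⋯ + a_{j,n}x_n`. -/
noncomputable def LvalC {n : ℕ} (y : CParam n → ℂ) (j : Fin n) (x : Fin n → ℂ) : ℂ :=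
  y (Sum.inl (j, 0)) + ∑ t : Fin n, y (Sum.inl (j, t.succ)) * x t

/-- The multiplier `λ_{k,j}` from the parameter vector. -/
def lamC {n : ℕ} (y : CParam n → ℂ) (k j : Fin n) : ℂ := y (Sum.inr (k, j))

/-- The embedded system `E_i(f)` on `ℂ^n`: the map whose vanishing expresses
`f_k(x) + Σ_{j=1}^{i} λ_{k,j} z_j = 0` (k = 1, …, n) together with the slicing
equations `L_j(x) + z_j = 0` (j = 1, …, i). -/
noncomputable def EmapC {n : ℕ} (f : Fin n → MvPolynomial (Fin n) ℂ)
    (i : ℕ) (hin : i ≤ n) (y : CParam n → ℂ)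
    (p : (Fin n → ℂ) × (Fin i → ℂ)) : (Fin n → ℂ) × (Fin i → ℂ) :=
  (fun k => MvPolynomial.eval p.1 (f k) +
      ∑ j : Fin i, lamC y k (j.castLE hin) * p.2 j,
   fun j => LvalC y (j.castLE hin) p.1 + p.2 j)

/-- The solution set of `E_i(f) = 0` in `ℂ^n × ℂ^i`. -/
noncomputable def ESolC {n : ℕ} (f : Fin n → MvPolynomial (Fin n) ℂ)
    (i : ℕ) (hin : i ≤ n) (y : CParam n → ℂ) :
    Set ((Fin n → ℂ) × (Fin i → ℂ)) :=
  {p | EmapC f i hin y p = 0}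

/-- The index of `z_i`, the last slack variable of `E_i`. -/
def lastIdx (i : ℕ) (hi1 : 1 ≤ i) : Fin i := ⟨i - 1, by omega⟩

/-- The Jacobian matrix of the embedded system `E_i(f)` at a point. -/
noncomputable def EJacC {n : ℕ} (f : Fin n → MvPolynomial (Fin n) ℂ)
    (i : ℕ) (hin : i ≤ n) (y : CParam n → ℂ)
    (p : (Fin n → ℂ) × (Fin i → ℂ)) : Matrix (Fin n ⊕ Fin i) (Fin n ⊕ Fin i) ℂ :=
  Matrix.of fun r c =>
    match r, c with
    | Sum.inl k, Sum.inl t => MvPolynomial.eval p.1 (MvPolynomial.pderiv t (f k))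
    | Sum.inl k, Sum.inr j => lamC y k (j.castLE hin)
    | Sum.inr j, Sum.inl t => y (Sum.inl (j.castLE hin, t.succ))
    | Sum.inr j, Sum.inr j' => if j = j' then 1 else 0

/-- The homotopy `H_i(x, z, t) = t·E_i + (1−t)·(E_{i-1}, z_i)`: the `k`-th equation
is `f_k(x) + Σ_{j<i} λ_{k,j} z_j + t λ_{k,i} z_i = 0`, the next `i−1` equations are
`L_j(x) + z_j = 0`, and the last one is `t L_i(x) + z_i = 0`. -/
noncomputable def HmapC {n : ℕ} (f : Fin n → MvPolynomial (Fin n) ℂ)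
    (i : ℕ) (hin : i ≤ n) (y : CParam n → ℂ) (t : ℝ)
    (p : (Fin n → ℂ) × (Fin i → ℂ)) : (Fin n → ℂ) × (Fin i → ℂ) :=
  (fun k => MvPolynomial.eval p.1 (f k) +
      ∑ j : Fin i, (if (j : ℕ) = i - 1 then (t : ℂ) else 1) *
        lamC y k (j.castLE hin) * p.2 j,
   fun j => (if (j : ℕ) = i - 1 then (t : ℂ) else 1) * LvalC y (j.castLE hin) p.1 + p.2 j)

/-- `X_i`, for `0 ≤ i ≤ n-1`: the set of points `x ∈ ℂ^n` such that `(x, z)` is the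
limit, as `t → 0⁺` and with `z_i = 0`, of a solution path of the homotopy
`H_{i+1}(x, z_1, …, z_{i+1}, t)` starting (at `t = 1`) at a solution of
`E_{i+1} = 0` with `z_{i+1} ≠ 0` (a point of `Z_{i+1}`).  The condition `z_i = 0`
is vacuous for `i = 0`. -/
noncomputable def XSet {n : ℕ} (f : Fin n → MvPolynomial (Fin n) ℂ)
    (y : CParam n → ℂ) (i : ℕ) (hin : i + 1 ≤ n) : Set (Fin n → ℂ) :=
  {x | ∃ (z : Fin (i + 1) → ℂ) (γ : ℝ → (Fin n → ℂ) × (Fin (i + 1) → ℂ)),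
    ContinuousOn γ (Set.Ioc 0 1) ∧
    (∀ t ∈ Set.Ioc (0 : ℝ) 1, HmapC f (i + 1) hin y t (γ t) = 0) ∧
    γ 1 ∈ ESolC f (i + 1) hin y ∧
    (γ 1).2 (lastIdx (i + 1) (by omega)) ≠ 0 ∧
    Tendsto γ (𝓝[>] (0 : ℝ)) (𝓝 (x, z)) ∧
    (∀ _ : 1 ≤ i, z ⟨i - 1, by omega⟩ = 0)}

/-- The common zero set of the system `f` in `ℂ^n`. -/
def zeroSetOf {n : ℕ} (f : Fin n → MvPolynomial (Fin n) ℂ) : Set (Fin n → ℂ) :=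
  {x | ∀ k, MvPolynomial.eval x (f k) = 0}

/-- The dimension of an algebraic subset of `ℂ^σ`: the Krull dimension of its
coordinate ring. -/
noncomputable def algSetDim {σ : Type*} (V : Set (σ → ℂ)) : WithBot (WithTop ℕ) :=
  ringKrullDim (MvPolynomial σ ℂ ⧸ MvPolynomial.vanishingIdeal ℂ V)



namespace TopEmbAux

open MvPolynomial Matrix

/-- The matrix of linear coefficients of the slicing functions, as polynomials. -/
noncomputable def Mmat (n : ℕ) : Matrix (Fin n) (Fin n) (MvPolynomial (CParam n) ℂ) :=
  Matrix.of fun j t => MvPolynomial.X (Sum.inl (j, t.succ))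

/-- Constant terms of the slicing functions, as polynomials. -/
noncomputable def bvec (n : ℕ) (j : Fin n) : MvPolynomial (CParam n) ℂ :=
  MvPolynomial.X (Sum.inl (j, 0))

/-- Cramer-style numerator vector: `adjugate(M) ⬝ (-b)`. -/
noncomputable def vvec (n : ℕ) : Fin n → MvPolynomial (CParam n) ℂ :=
  (Mmat n).adjugate.mulVec fun j => -(bvec n j)

/-- `W(y) = det(M(y))^D · g(x₀(y))`, written as a polynomial in `y`. -/
noncomputable def Wpoly {n : ℕ} (g : MvPolynomial (Fin n) ℂ) : MvPolynomial (CParam n) ℂ :=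
  ∑ m ∈ g.support, MvPolynomial.C (g.coeff m) *
    (Mmat n).det ^ (g.totalDegree - ∑ t, m t) * ∏ t, (vvec n t) ^ (m t)

/-- The matrix `M` evaluated at a parameter point `y`. -/
noncomputable def Amat {n : ℕ} (y : CParam n → ℂ) : Matrix (Fin n) (Fin n) ℂ :=
  (MvPolynomial.eval y).mapMatrix (Mmat n)

lemma Amat_apply {n : ℕ} (y : CParam n → ℂ) (j t : Fin n) :
    Amat y j t = y (Sum.inl (j, t.succ)) := by
  simp [Amat, Mmat, RingHom.mapMatrix_apply]

lemma eval_vvec {n : ℕ} (y : CParam n → ℂ) (x : Fin n → ℂ)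
    (h : (Amat y).mulVec x = fun j => -(y (Sum.inl (j, 0)))) (t : Fin n) :
    MvPolynomial.eval y (vvec n t) = (Amat y).det * x t := by
  have hAdj : ∀ a b, MvPolynomial.eval y ((Mmat n).adjugate a b) = (Amat y).adjugate a b := by
    intro a b
    have h2 := (MvPolynomial.eval y).map_adjugate (Mmat n)
    have := congrArg (fun M => M a b) h2
    simpa [RingHom.mapMatrix_apply, Amat] using this
  calc MvPolynomial.eval y (vvec n t)
      = ∑ j, (Amat y).adjugate t j * (-(y (Sum.inl (j, 0)))) := by
        simp [vvec, Matrix.mulVec, dotProduct, hAdj, bvec]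
    _ = (Amat y).adjugate.mulVec ((Amat y).mulVec x) t := by
        rw [h]; simp [Matrix.mulVec, dotProduct]
    _ = ((Amat y).adjugate * Amat y).mulVec x t := by rw [Matrix.mulVec_mulVec]
    _ = ((Amat y).det • (1 : Matrix (Fin n) (Fin n) ℂ)).mulVec x t := by
        rw [Matrix.adjugate_mul]
    _ = (Amat y).det * x t := by
        simp [Matrix.smul_mulVec, Matrix.one_mulVec]

lemma eval_det {n : ℕ} (y : CParam n → ℂ) :
    MvPolynomial.eval y (Mmat n).det = (Amat y).det :=
  (MvPolynomial.eval y).map_det _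

lemma eval_Wpoly {n : ℕ} (g : MvPolynomial (Fin n) ℂ) (y : CParam n → ℂ) (x : Fin n → ℂ)
    (h : (Amat y).mulVec x = fun j => -(y (Sum.inl (j, 0)))) :
    MvPolynomial.eval y (Wpoly g)
      = (Amat y).det ^ g.totalDegree * MvPolynomial.eval x g := by
  rw [Wpoly, map_sum, MvPolynomial.eval_eq', Finset.mul_sum]
  refine Finset.sum_congr rfl fun m hm => ?_
  have hdeg : (∑ t, m t) ≤ g.totalDegree := by
    have h1 : (m.sum fun _ e => e) ≤ g.totalDegree := MvPolynomial.le_totalDegree hm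
    have h2 : (m.sum fun _ e => e) = ∑ t, m t := Finsupp.sum_fintype _ _ (fun _ => rfl)
    omega
  have hpow : (Amat y).det ^ (g.totalDegree - ∑ t, m t) * (Amat y).det ^ (∑ t, m t)
      = (Amat y).det ^ g.totalDegree := pow_sub_mul_pow _ hdeg
  simp only [_root_.map_mul, map_pow, map_prod, MvPolynomial.eval_C, eval_det,
    eval_vvec y x h, mul_pow, Finset.prod_mul_distrib, Finset.prod_pow_eq_pow_sum]
  rw [← hpow]; ring

end TopEmbAux

/-- Let `f = (f_1, …, f_n)` be a system of `n` algebraic functions on `ℂ^n` and let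
`E_n(x, z)` be the embedded system `f_k(x) + Σ_{j=1}^{n} λ_{k,j} z_j = 0`
(k = 1, …, n), `L_j(x) + z_j = 0` (j = 1, …, n), with the `L_j` affine-linear.
If the coefficients of the `L_j` and the multipliers `λ_{k,j}` are chosen
generically — i.e., in a nonempty Zariski open subset of the parameter space
`ℂ^{n×(n+1)} × ℂ^{n×n}` — then `E_n(x, z) = 0` has a solution with
`z = (z_1, …, z_n) = 0` only if `f` is identically zero on `ℂ^n`. -/
theorem top_embedding_zero_solution_iff_trivial (n : ℕ) (hn : 0 < n)
    (f : Fin n → MvPolynomial (Fin n) ℂ) :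
    ∃ U : Set (CParam n → ℂ), IsZariskiOpen U ∧ U.Nonempty ∧
      ∀ y ∈ U,
        (∃ x : Fin n → ℂ, (x, (0 : Fin n → ℂ)) ∈ ESolC f n le_rfl y) →
        ∀ (x : Fin n → ℂ) (k : Fin n), MvPolynomial.eval x (f k) = 0 := by
  classical
  by_cases hf : ∀ (x : Fin n → ℂ) (k : Fin n), MvPolynomial.eval x (f k) = 0
  · refine ⟨Set.univ, ⟨{1}, ?_⟩, ⟨0, trivial⟩, fun y _ _ => hf⟩
    ext y; simp [zlocus]
  · push_neg at hf
    obtain ⟨x₀, k₀, hx₀⟩ := hf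
    set g := f k₀ with hg
    set Q := (TopEmbAux.Mmat n).det * TopEmbAux.Wpoly g with hQ
    refine ⟨{y | MvPolynomial.eval y Q ≠ 0}, ⟨{Q}, ?_⟩, ?_, ?_⟩
    · ext y; simp [zlocus]
    · -- nonemptiness: explicit witness with M = identity, b = -x₀
      refine ⟨Sum.elim (fun jt => if jt.2 = 0 then -(x₀ jt.1)
        else if (jt.2 : ℕ) = (jt.1 : ℕ) + 1 then 1 else 0) (fun _ => 0), ?_⟩
      set y₀ : CParam n → ℂ := Sum.elim (fun jt => if jt.2 = 0 then -(x₀ jt.1)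
        else if (jt.2 : ℕ) = (jt.1 : ℕ) + 1 then 1 else 0) (fun _ => 0) with hy₀
      have hA : TopEmbAux.Amat y₀ = 1 := by
        ext j t
        rw [TopEmbAux.Amat_apply]
        simp only [hy₀, Sum.elim_inl]
        rw [if_neg (Fin.succ_ne_zero t)]
        simp only [Fin.val_succ, Matrix.one_apply]
        by_cases hjt : j = t
        · subst hjt; simp
        · rw [if_neg, if_neg hjt]
          intro hc
          exact hjt (Fin.ext (by omega)).symm
      have hmul : (TopEmbAux.Amat y₀).mulVec x₀ = fun j => -(y₀ (Sum.inl (j, 0))) := by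
        rw [hA, Matrix.one_mulVec]
        funext j
        simp [hy₀]
      have hW := TopEmbAux.eval_Wpoly g y₀ x₀ hmul
      simp only [Set.mem_setOf_eq, hQ, map_mul, TopEmbAux.eval_det, hW, hA,
        Matrix.det_one, one_pow, one_mul]
      exact hx₀
    · intro y hy ⟨x, hsol⟩
      exfalso
      have hsol' : EmapC f n le_rfl y (x, 0) = 0 := hsol
      have h1 := congrFun (congrArg Prod.fst hsol') k₀
      have h2 := congrArg Prod.snd hsol'
      have hgx : MvPolynomial.eval x g = 0 := by
        simpa [EmapC] using h1
      have hmul : (TopEmbAux.Amat y).mulVec x = fun j => -(y (Sum.inl (j, 0))) := by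
        funext j
        have := congrFun h2 j
        simp only [EmapC, LvalC, Fin.castLE_rfl, id_eq, Prod.snd_zero,
          Pi.zero_apply, add_zero] at this
        have hMj : ∀ t, TopEmbAux.Amat y j t = y (Sum.inl (j, t.succ)) := by
          intro t; rw [TopEmbAux.Amat_apply]
        rw [Matrix.mulVec, dotProduct]
        simp only [hMj]
        linear_combination this
      have hW := TopEmbAux.eval_Wpoly g y x hmul
      apply hy
      rw [hQ, map_mul, hW, hgx]
      ring
end

section
/- Let f = (f_1, ..., f_n) be a system of n algebraic functions on ℂ^n embedded into the systems E_i with parameters chosen in the nonempty Zariski open set U guaranteed by the embedding lemma, fix i with 2 ≤ i ≤ n, and suppose that all solutions of E_{i-1} = 0 with z_{i-1} ≠ 0 are isolated and nonsingular. Then for a generic choice of the affine-linear function L_i, the system E_i = 0 has no solutions with z_i = 0 but (z_1, ..., z_i) ≠ 0; that is, any solution of E_i = 0 with z_i = 0 satisfies z_1 = ... = z_i = 0. -/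
set_option synthInstance.maxHeartbeats 1000000
set_option maxHeartbeats 1000000

open Filter Topology

/-- Replace the coefficient vector of the affine-linear function `L_i`
(`i` counted from `1`) in the parameter vector `y` by `c`. -/
def setLParam {n : ℕ} (y : CParam n → ℂ) (i : ℕ) (c : Fin (n + 1) → ℂ) :
    CParam n → ℂ :=
  fun s => match s with
    | Sum.inl (j, t) => if (j : ℕ) = i - 1 then c t else y (Sum.inl (j, t))
    | Sum.inr kj => y (Sum.inr kj)


section SliceAuxSection

namespace SliceAux
open MvPolynomial

section PtIdeal
set_option linter.unusedSectionVars false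

variable {ρ : Type*} [Fintype ρ] [DecidableEq ρ]

noncomputable def ptIdeal (v : ρ → ℂ) : Ideal (MvPolynomial ρ ℂ) :=
  Ideal.span (Set.range fun s => X s - C (v s))

lemma X_sub_C_mem (v : ρ → ℂ) (s : ρ) : X s - C (v s) ∈ ptIdeal v :=
  Ideal.subset_span ⟨s, rfl⟩

lemma taylor_mem (v : ρ → ℂ) (g : MvPolynomial ρ ℂ) :
    g - C (eval v g) - ∑ s, C (eval v (pderiv s g)) * (X s - C (v s)) ∈ ptIdeal v ^ 2 := by
  induction g using MvPolynomial.induction_on with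
  | C a => simpa using (Ideal.zero_mem _)
  | add g h hg hh =>
      have heq : (g + h) - C (eval v (g + h))
            - ∑ s, C (eval v (pderiv s (g + h))) * (X s - C (v s))
          = (g - C (eval v g) - ∑ s, C (eval v (pderiv s g)) * (X s - C (v s)))
            + (h - C (eval v h) - ∑ s, C (eval v (pderiv s h)) * (X s - C (v s))) := by
        simp only [map_add, add_mul, Finset.sum_add_distrib]
        ring
      rw [heq]
      exact Ideal.add_mem _ hg hh
  | mul_X g s hg =>
      have hu : ∀ t, C (eval v (pderiv t (g * X s))) * (X t - C (v t)) =
          C (eval v (pderiv t g)) * (X t - C (v t)) * C (v s) +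
          (if t = s then C (eval v g) * (X s - C (v s)) else 0) := by
        intro t
        rcases eq_or_ne t s with rfl | h
        · rw [pderiv_mul, pderiv_X_self, if_pos rfl]
          simp only [map_add, map_mul, eval_X, mul_one, map_one]
          ring
        · rw [pderiv_mul, pderiv_X_of_ne (Ne.symm h), if_neg h]
          simp only [map_add, map_mul, eval_X, mul_zero, map_zero, add_zero]
          ring
      have hsum : ∑ t, C (eval v (pderiv t (g * X s))) * (X t - C (v t))
          = (∑ t, C (eval v (pderiv t g)) * (X t - C (v t))) * C (v s)
            + C (eval v g) * (X s - C (v s)) := by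
        rw [Finset.sum_congr rfl fun t _ => hu t, Finset.sum_add_distrib,
          Finset.sum_ite_eq' Finset.univ s _, if_pos (Finset.mem_univ s), Finset.sum_mul]
      have hg1 : g - C (eval v g) ∈ ptIdeal v := by
        have heq : g - C (eval v g)
            = (g - C (eval v g) - ∑ t, C (eval v (pderiv t g)) * (X t - C (v t)))
              + ∑ t, C (eval v (pderiv t g)) * (X t - C (v t)) := by ring
        rw [heq]
        exact Ideal.add_mem _ (Ideal.pow_le_self two_ne_zero hg)
          (Ideal.sum_mem _ fun t _ => Ideal.mul_mem_left _ _ (X_sub_C_mem v t))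
      have hkey : g * X s - C (eval v (g * X s))
            - ∑ t, C (eval v (pderiv t (g * X s))) * (X t - C (v t))
          = C (v s) * (g - C (eval v g) - ∑ t, C (eval v (pderiv t g)) * (X t - C (v t)))
            + (g - C (eval v g)) * (X s - C (v s)) := by
        rw [hsum]
        have he : eval v (g * X s) = eval v g * v s := by simp
        rw [he, map_mul]
        ring
      rw [hkey]
      refine Ideal.add_mem _ (Ideal.mul_mem_left _ _ hg) ?_
      rw [pow_two]
      exact Ideal.mul_mem_mul hg1 (X_sub_C_mem v s)

lemma eval_eq_zero_of_mem (v : ρ → ℂ) {g : MvPolynomial ρ ℂ} (h : g ∈ ptIdeal v) :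
    eval v g = 0 := by
  have hle : ptIdeal v ≤ RingHom.ker (eval v : MvPolynomial ρ ℂ →+* ℂ) := by
    rw [ptIdeal, Ideal.span_le]
    rintro _ ⟨s, rfl⟩
    simp [RingHom.mem_ker]
  exact hle h

lemma mem_of_eval_eq_zero (v : ρ → ℂ) {g : MvPolynomial ρ ℂ} (h : eval v g = 0) :
    g ∈ ptIdeal v := by
  have heq : g = (g - C (eval v g) - ∑ s, C (eval v (pderiv s g)) * (X s - C (v s)))
      + ∑ s, C (eval v (pderiv s g)) * (X s - C (v s)) + C (eval v g) := by ring
  rw [heq]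
  refine Ideal.add_mem _ (Ideal.add_mem _ (Ideal.pow_le_self two_ne_zero (taylor_mem v g))
    (Ideal.sum_mem _ fun t _ => Ideal.mul_mem_left _ _ (X_sub_C_mem v t))) ?_
  rw [h, map_zero]
  exact Ideal.zero_mem _

lemma ptIdeal_eq_ker (v : ρ → ℂ) :
    ptIdeal v = RingHom.ker (eval v : MvPolynomial ρ ℂ →+* ℂ) :=
  le_antisymm (fun _ h => eval_eq_zero_of_mem v h) (fun _ h => mem_of_eval_eq_zero v h)

lemma ptIdeal_isMaximal (v : ρ → ℂ) : (ptIdeal v).IsMaximal := by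
  rw [ptIdeal_eq_ker]
  exact RingHom.ker_isMaximal_of_surjective _ (fun c => ⟨C c, eval_C c⟩)

lemma ptIdeal_mem_minimalPrimes (v : ρ → ℂ) (G : ρ → MvPolynomial ρ ℂ)
    (hG : ∀ r, eval v (G r) = 0)
    (hJdet : (Matrix.of fun r s => eval v (pderiv s (G r))).det ≠ 0) :
    ptIdeal v ∈ (Ideal.span (Set.range G)).minimalPrimes := by
  classical
  set I : Ideal (MvPolynomial ρ ℂ) := Ideal.span (Set.range G) with hIdef
  have hIm : I ≤ ptIdeal v := by
    rw [hIdef, Ideal.span_le]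
    rintro _ ⟨r, rfl⟩
    exact mem_of_eval_eq_zero v (hG r)
  set J : Matrix ρ ρ ℂ := Matrix.of fun r s => eval v (pderiv s (G r)) with hJdef
  set K : Matrix ρ ρ ℂ := J⁻¹ with hKdef
  have hKJ : K * J = 1 := Matrix.nonsing_inv_mul J (isUnit_iff_ne_zero.mpr hJdet)
  have hEps : ∀ r, G r - ∑ t, C (J r t) * (X t - C (v t)) ∈ ptIdeal v ^ 2 := by
    intro r
    have h := taylor_mem v (G r)
    rw [hG r, map_zero, sub_zero] at h
    exact h
  have hkey : ptIdeal v ≤ I ⊔ ptIdeal v ^ 2 := by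
    rw [ptIdeal, Ideal.span_le]
    rintro _ ⟨s, rfl⟩
    show X s - C (v s) ∈ I ⊔ ptIdeal v ^ 2
    have hone : ∀ t, (∑ r, K s r * J r t) = if s = t then 1 else 0 := by
      intro t
      have h1 := congrFun (congrFun hKJ s) t
      simpa [Matrix.mul_apply, Matrix.one_apply] using h1
    have hlin : ∑ r, C (K s r) * ∑ t, C (J r t) * (X t - C (v t)) = X s - C (v s) := by
      simp_rw [Finset.mul_sum, ← mul_assoc, ← map_mul]
      rw [Finset.sum_comm]
      simp_rw [← Finset.sum_mul, ← map_sum, hone]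
      simp [apply_ite C, ite_mul, Finset.sum_ite_eq]
    have hx : X s - C (v s) = (∑ r, C (K s r) * G r)
        - ∑ r, C (K s r) * (G r - ∑ t, C (J r t) * (X t - C (v t))) := by
      rw [← Finset.sum_sub_distrib]
      simp_rw [← mul_sub, sub_sub_cancel]
      exact hlin.symm
    rw [hx]
    refine Submodule.sub_mem _ (Ideal.mem_sup_left ?_) (Ideal.mem_sup_right ?_)
    · exact Ideal.sum_mem _ fun r _ => Ideal.mul_mem_left _ _ (Ideal.subset_span ⟨r, rfl⟩)
    · exact Ideal.sum_mem _ fun r _ => Ideal.mul_mem_left _ _ (hEps r)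
  haveI hprime : (ptIdeal v).IsPrime := (ptIdeal_isMaximal v).isPrime
  refine ⟨⟨hprime, hIm⟩, ?_⟩
  rintro q ⟨hq, hIq⟩ hqm
  -- goal : ptIdeal v ≤ q
  set S := Localization.AtPrime (ptIdeal v)
  set φ := algebraMap (MvPolynomial ρ ℂ) S with hφdef
  haveI : IsNoetherianRing S :=
    IsLocalization.isNoetherianRing (ptIdeal v).primeCompl S inferInstance
  have hmap_m : Ideal.map φ (ptIdeal v) = IsLocalRing.maximalIdeal S :=
    Localization.AtPrime.map_eq_maximalIdeal
  have h1 : Ideal.map φ (ptIdeal v) ≤ Ideal.map φ I ⊔ Ideal.map φ (ptIdeal v) ^ 2 := by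
    have h2 := Ideal.map_mono (f := φ) hkey
    rwa [Ideal.map_sup, Ideal.map_pow] at h2
  have hfg : (Ideal.map φ (ptIdeal v)).FG := IsNoetherian.noetherian _
  have hjac : Ideal.map φ (ptIdeal v) ≤ Ideal.jacobson ⊥ := by
    rw [IsLocalRing.jacobson_eq_maximalIdeal ⊥ bot_ne_top, hmap_m]
  have hNN : Ideal.map φ (ptIdeal v) ≤
      Ideal.map φ I ⊔ Ideal.map φ (ptIdeal v) • Ideal.map φ (ptIdeal v) := by
    rwa [Ideal.smul_eq_mul, ← pow_two]
  have hNak := Submodule.sup_eq_sup_smul_of_le_smul_of_le_jacobson hfg hjac hNN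
  rw [Ideal.smul_eq_mul, Ideal.bot_mul, sup_bot_eq] at hNak
  -- hNak : map φ I ⊔ map φ (ptIdeal v) = map φ I
  have hle : Ideal.map φ (ptIdeal v) ≤ Ideal.map φ I :=
    hNak ▸ le_sup_right
  have hle2 : Ideal.map φ (ptIdeal v) ≤ Ideal.map φ q := le_trans hle (Ideal.map_mono hIq)
  have hqd : Disjoint ((ptIdeal v).primeCompl : Set (MvPolynomial ρ ℂ)) (q : Set (MvPolynomial ρ ℂ)) := by
    rw [Set.disjoint_left]
    intro a ha haq
    exact ha (hqm haq)
  have hcomap_q : Ideal.comap φ (Ideal.map φ q) = q :=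
    IsLocalization.comap_map_of_isPrime_disjoint (ptIdeal v).primeCompl S hq hqd
  intro x hx
  have : φ x ∈ Ideal.map φ q := hle2 (Ideal.mem_map_of_mem φ hx)
  rw [← hcomap_q]
  exact Ideal.mem_comap.mpr this

lemma finite_minimalPrimes {R : Type*} [CommRing R] [IsNoetherianRing R] (I : Ideal R) :
    I.minimalPrimes.Finite := by
  rw [Ideal.minimalPrimes_eq_comap]
  exact (minimalPrimes.finite_of_isNoetherianRing _).image _

lemma finite_sols (G : ρ → MvPolynomial ρ ℂ) :
    {v : ρ → ℂ | (∀ r, eval v (G r) = 0) ∧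
      (Matrix.of fun r s => eval v (pderiv s (G r))).det ≠ 0}.Finite := by
  have hmin := finite_minimalPrimes (Ideal.span (Set.range G))
  have hinj : Function.Injective (ptIdeal (ρ := ρ)) := by
    intro v w h
    funext s
    have h1 : eval w (X s - C (v s)) = 0 :=
      eval_eq_zero_of_mem w (h ▸ X_sub_C_mem v s)
    have : w s - v s = 0 := by simpa using h1
    linear_combination -this
  have hsub : {v : ρ → ℂ | (∀ r, eval v (G r) = 0) ∧
        (Matrix.of fun r s => eval v (pderiv s (G r))).det ≠ 0}
      ⊆ ptIdeal ⁻¹' (Ideal.span (Set.range G)).minimalPrimes :=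
    fun v hv => ptIdeal_mem_minimalPrimes v G hv.1 hv.2
  exact (hmin.preimage hinj.injOn).subset hsub

end PtIdeal

noncomputable def sysG {n d : ℕ} (hdn : d ≤ n) (f : Fin n → MvPolynomial (Fin n) ℂ)
    (y : CParam n → ℂ) : (Fin n ⊕ Fin d) → MvPolynomial (Fin n ⊕ Fin d) ℂ
  | Sum.inl k => rename Sum.inl (f k)
      + ∑ j : Fin d, C (lamC y k (j.castLE hdn)) * X (Sum.inr j)
  | Sum.inr j => C (y (Sum.inl (j.castLE hdn, 0)))
      + ∑ t : Fin n, C (y (Sum.inl (j.castLE hdn, t.succ))) * X (Sum.inl t)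
      + X (Sum.inr j)

lemma elim_comp_inl {n d : ℕ} (p : (Fin n → ℂ) × (Fin d → ℂ)) :
    (Sum.elim p.1 p.2 ∘ Sum.inl : Fin n → ℂ) = p.1 := rfl

lemma eval_sysG {n d : ℕ} (hdn : d ≤ n) (f : Fin n → MvPolynomial (Fin n) ℂ)
    (y : CParam n → ℂ) (p : (Fin n → ℂ) × (Fin d → ℂ)) :
    (∀ r, eval (Sum.elim p.1 p.2) (sysG hdn f y r) = 0) ↔ EmapC f d hdn y p = 0 := by
  rw [Prod.ext_iff]
  constructor
  · intro h
    constructor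
    · funext k
      have := h (Sum.inl k)
      simpa [sysG, eval_rename, EmapC] using this
    · funext j
      have := h (Sum.inr j)
      simpa [sysG, EmapC, LvalC] using this
  · rintro ⟨h1, h2⟩ r
    cases r with
    | inl k =>
        have := congrFun h1 k
        simpa [sysG, eval_rename, EmapC] using this
    | inr j =>
        have := congrFun h2 j
        simpa [sysG, EmapC, LvalC] using this

lemma jac_sysG {n d : ℕ} (hdn : d ≤ n) (f : Fin n → MvPolynomial (Fin n) ℂ)
    (y : CParam n → ℂ) (p : (Fin n → ℂ) × (Fin d → ℂ)) :
    (Matrix.of fun r s => eval (Sum.elim p.1 p.2) (pderiv s (sysG hdn f y r)))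
      = EJacC f d hdn y p := by
  ext r s
  cases r with
  | inl k =>
      cases s with
      | inl t =>
          have hr : pderiv (Sum.inl t : Fin n ⊕ Fin d) (rename Sum.inl (f k))
              = rename Sum.inl (pderiv t (f k)) :=
            pderiv_rename Sum.inl_injective t (f k)
          simp [sysG, EJacC, hr, eval_rename, pderiv_X_of_ne]
      | inr j =>
          have hr : pderiv (Sum.inr j : Fin n ⊕ Fin d) (rename Sum.inl (f k)) = 0 := by
            apply pderiv_eq_zero_of_notMem_vars
            intro hmem
            rcases MvPolynomial.mem_vars_rename _ _ hmem with ⟨u, _, hu⟩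
            simp at hu
          simp [sysG, EJacC, hr, Pi.single_apply, Finset.sum_ite_eq]
  | inr j =>
      cases s with
      | inl t =>
          simp [sysG, EJacC, pderiv_X_of_ne, Pi.single_apply, Finset.sum_ite_eq]
      | inr j' =>
          rcases eq_or_ne j j' with rfl | h
          · simp [sysG, EJacC, pderiv_X_of_ne]
          · simp [sysG, EJacC, pderiv_X_of_ne, h, (Sum.inr_injective.ne_iff).mpr h]

lemma finite_nonsing_sols {n d : ℕ} (hdn : d ≤ n) (f : Fin n → MvPolynomial (Fin n) ℂ)
    (y : CParam n → ℂ) :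
    {p : (Fin n → ℂ) × (Fin d → ℂ) |
      p ∈ ESolC f d hdn y ∧ (EJacC f d hdn y p).det ≠ 0}.Finite := by
  have hfin := finite_sols (sysG hdn f y)
  have hφ : Function.Injective
      (fun p : (Fin n → ℂ) × (Fin d → ℂ) => Sum.elim p.1 p.2) := by
    intro p q h
    exact Prod.ext (by funext k; exact congrFun h (Sum.inl k))
      (by funext j; exact congrFun h (Sum.inr j))
  refine (hfin.preimage hφ.injOn).subset ?_
  intro p hp
  simp only [Set.mem_preimage, Set.mem_setOf_eq]
  refine ⟨(eval_sysG hdn f y p).mpr hp.1, ?_⟩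
  rw [jac_sysG hdn f y p]
  exact hp.2

end SliceAux

end SliceAuxSection

/-- Let `f = (f_1, …, f_n)` be a system of `n` algebraic functions on `ℂ^n`
embedded into the systems `E_i`, fix `i` with `2 ≤ i ≤ n`, and suppose (as the
embedding lemma guarantees for parameters in its Zariski open set `U`) that all
solutions of `E_{i-1} = 0` with `z_{i-1} ≠ 0` are isolated and nonsingular, and
that the solutions of `E_{i-1} = 0` with `(z_1, …, z_{i-1}) ≠ 0` are exactly those
with `z_{i-1} ≠ 0`.  Then for a generic choice of the affine-linear function `L_i`
— its coefficient vector lying in a nonempty Zariski open subset of `ℂ^{n+1}` —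
the system `E_i = 0` has no solutions with `z_i = 0` but `(z_1, …, z_i) ≠ 0`;
i.e., any solution of `E_i = 0` with `z_i = 0` satisfies `z_1 = ⋯ = z_i = 0`. -/
theorem generic_slice_forces_all_slack_zero (n : ℕ) (hn : 0 < n)
    (f : Fin n → MvPolynomial (Fin n) ℂ)
    (i : ℕ) (hi2 : 2 ≤ i) (hin : i ≤ n)
    (y : CParam n → ℂ)
    (hreg : ∀ p ∈ ESolC f (i - 1) (by omega) y,
      p.2 (lastIdx (i - 1) (by omega)) ≠ 0 →
        IsIsolatedIn (ESolC f (i - 1) (by omega) y) p ∧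
        (EJacC f (i - 1) (by omega) y p).det ≠ 0)
    (hlast : ∀ p ∈ ESolC f (i - 1) (by omega) y,
      p.2 ≠ 0 → p.2 (lastIdx (i - 1) (by omega)) ≠ 0) :
    ∃ V : Set (Fin (n + 1) → ℂ), IsZariskiOpen V ∧ V.Nonempty ∧
      ∀ c ∈ V, ∀ p ∈ ESolC f i hin (setLParam y i c),
        p.2 (lastIdx i (by omega)) = 0 → p.2 = 0 := by
  classical
  obtain ⟨d, rfl⟩ : ∃ d, i = d + 1 := ⟨i - 1, by omega⟩
  have hd1 : 1 ≤ d := by omega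
  have hdn : d ≤ n := by omega
  open MvPolynomial in
  have hfin : {p : (Fin n → ℂ) × (Fin d → ℂ) |
      p ∈ ESolC f d hdn y ∧ (EJacC f d hdn y p).det ≠ 0}.Finite :=
    SliceAux.finite_nonsing_sols hdn f y
  have hT : (Prod.fst '' {p : (Fin n → ℂ) × (Fin d → ℂ) |
      p ∈ ESolC f d hdn y ∧ (EJacC f d hdn y p).det ≠ 0}).Finite := hfin.image _
  set Q : MvPolynomial (Fin (n + 1)) ℂ :=
    ∏ x ∈ hT.toFinset, (MvPolynomial.X 0 +
      ∑ t : Fin n, MvPolynomial.C (x t) * MvPolynomial.X t.succ) with hQdef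
  refine ⟨{c | MvPolynomial.eval c Q ≠ 0}, ⟨{Q}, ?_⟩, ?_, ?_⟩
  · ext c
    simp [zlocus]
  · refine ⟨fun j => if j = 0 then 1 else 0, ?_⟩
    show MvPolynomial.eval _ Q ≠ 0
    rw [hQdef, map_prod]
    apply Finset.prod_ne_zero_iff.mpr
    intro x hx
    have : MvPolynomial.eval (fun j : Fin (n + 1) => if j = 0 then (1 : ℂ) else 0)
        (MvPolynomial.X 0 + ∑ t : Fin n, MvPolynomial.C (x t) * MvPolynomial.X t.succ)
        = 1 := by
      simp [Fin.succ_ne_zero]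
    rw [this]
    exact one_ne_zero
  · intro c hc p hp hzlast
    by_contra hne
    -- the solution of E_d obtained by dropping the last coordinate
    set q : (Fin n → ℂ) × (Fin d → ℂ) := (p.1, fun j => p.2 j.castSucc) with hqdef
    have hlastidx : lastIdx (d + 1) (by omega) = Fin.last d := rfl
    have hlam : ∀ k j, lamC (setLParam y (d + 1) c) k j = lamC y k j := fun k j => rfl
    have hLval : ∀ a : Fin n, (a : ℕ) < d →
        ∀ x, LvalC (setLParam y (d + 1) c) a x = LvalC y a x := by
      intro a ha x
      have hne' : (a : ℕ) ≠ d := by omega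
      simp [LvalC, setLParam, hne']
    have hp1 : ∀ k, MvPolynomial.eval p.1 (f k) +
        ∑ j : Fin (d + 1), lamC (setLParam y (d + 1) c) k (j.castLE hin) * p.2 j = 0 :=
      fun k => congrFun (congrArg Prod.fst hp) k
    have hp2 : ∀ j : Fin (d + 1),
        LvalC (setLParam y (d + 1) c) (j.castLE hin) p.1 + p.2 j = 0 :=
      fun j => congrFun (congrArg Prod.snd hp) j
    have hcastval : ∀ j : Fin d, (j.castSucc.castLE hin) = j.castLE hdn := by
      intro j; ext; simp
    have hqsol : q ∈ ESolC f d hdn y := by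
      show EmapC f d hdn y q = 0
      refine Prod.ext ?_ ?_
      · funext k
        have h := hp1 k
        rw [Fin.sum_univ_castSucc] at h
        have hlast0 : p.2 (Fin.last d) = 0 := by
          rw [← hlastidx]; exact hzlast
        rw [hlast0, mul_zero, add_zero] at h
        show MvPolynomial.eval q.1 (f k) +
            ∑ j : Fin d, lamC y k (j.castLE hdn) * q.2 j = 0
        exact h
      · funext j
        have h := hp2 j.castSucc
        rw [hcastval j] at h
        rw [hLval (j.castLE hdn) (by simpa using j.isLt) p.1] at h
        exact h
    have hqne : q.2 ≠ 0 := by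
      intro h0
      apply hne
      funext j
      rcases eq_or_ne j (Fin.last d) with rfl | hj
      · rw [← hlastidx]; exact hzlast
      · have hlt : (j : ℕ) < d := by
          have := j.isLt
          have : (j : ℕ) ≠ d := fun hh => hj (Fin.ext hh)
          omega
        have := congrFun h0 ⟨(j : ℕ), hlt⟩
        simpa [hqdef, Fin.ext_iff] using this
    have hzd : q.2 (lastIdx d hd1) ≠ 0 := hlast q hqsol hqne
    have hdet : (EJacC f d hdn y q).det ≠ 0 := (hreg q hqsol hzd).2
    have hmem : p.1 ∈ hT.toFinset := hT.mem_toFinset.mpr ⟨q, ⟨hqsol, hdet⟩, rfl⟩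
    -- the slicing equation L_{d+1}(p.1) = 0
    have hLzero : MvPolynomial.eval c (MvPolynomial.X 0 +
        ∑ t : Fin n, MvPolynomial.C (p.1 t) * MvPolynomial.X t.succ) = 0 := by
      have h := hp2 (Fin.last d)
      have hlast0 : p.2 (Fin.last d) = 0 := by rw [← hlastidx]; exact hzlast
      rw [hlast0, add_zero] at h
      have hval : ((Fin.last d).castLE hin : ℕ) = d := by simp
      have hLv : LvalC (setLParam y (d + 1) c) ((Fin.last d).castLE hin) p.1
          = c 0 + ∑ t : Fin n, c t.succ * p.1 t := by
        simp [LvalC, setLParam, hval]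
      rw [hLv] at h
      rw [map_add, map_sum]
      simp only [MvPolynomial.eval_X, map_mul, MvPolynomial.eval_C]
      rw [← h]
      congr 1
      exact Finset.sum_congr rfl fun t _ => mul_comm _ _
    apply hc
    show MvPolynomial.eval c Q = 0
    rw [hQdef, map_prod]
    exact Finset.prod_eq_zero hmem hLzero
end
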